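/- Fix p ≥ 1, Lipschitz constants L₁,…,L_p ≥ 0, a map δ : X^p → X that is Lᵢ-Lipschitz in the i-th argument, and λ > 0. For two sequences x₁,…,x_T and x′₁,…,x′_T in X (with common initial history x_{1−p:0} = x′_{1−p:0}), define switching costs d_t = ½‖x_t − δ(x_{t−p},…,x_{t−1})‖² and d′_t = ½‖x′_t − δ(x′_{t−p},…,x′_{t−1})‖². Then Σ_{t=1}^T d_t − (1+λ) Σ_{t=1}^T d′_t ≤ (1+1/λ)·((1+Σ_{k=1}^p L_k)²/2)·Σ_{t=1}^T ‖x_t − x′_t‖². -/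

import Mathlib

/-!
Write `e_t = ‖x_t - x'_t‖`. At each step, Peter–Paul gives
`d_t - (1 + λ) d'_t ≤ ½ (1 + 1/λ) ‖(x_t - δ_t) - (x'_t - δ'_t)‖²`; the triangle inequality and
the coordinatewise Lipschitz bounds make this at most `½ (1 + 1/λ) (e_t + Σ Lᵢ e_{t-i})²`, and
weighted Jensen at most `½ (1 + 1/λ) (1 + ΣL) (e_t² + Σ Lᵢ e_{t-i}²)`. Summing over `t`, each
lagged error `e_{t-i}²` is either an error at a time in `1..T` or vanishes by the common initial
history, which produces the second factor `1 + ΣL`.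
-/

open Finset

theorem norm_sub_le_sum_of_coordinatewise_lipschitz {ι E F : Type*} [Fintype ι]
    [SeminormedAddCommGroup E] [SeminormedAddCommGroup F] {δ : (ι → E) → F} {L : ι → ℝ}
    (hδ : ∀ (i : ι) (u v : ι → E), (∀ j, j ≠ i → u j = v j) → ‖δ u - δ v‖ ≤ L i * ‖u i - v i‖)
    (u v : ι → E) : ‖δ u - δ v‖ ≤ ∑ i, L i * ‖u i - v i‖ := by
  classical
  -- Replace the coordinates of `u` by those of `v` one at a time.
  suffices h : ∀ s : Finset ι, ‖δ u - δ (s.piecewise v u)‖ ≤ ∑ i ∈ s, L i * ‖u i - v i‖ by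
    simpa using h univ
  intro s
  induction s using Finset.induction_on with
  | empty => simp
  | insert a s ha ih =>
    have hstep : ‖δ (s.piecewise v u) - δ ((insert a s).piecewise v u)‖ ≤ L a * ‖u a - v a‖ := by
      rw [piecewise_insert]
      refine (hδ a _ _ fun j hj => (Function.update_of_ne hj _ _).symm).trans_eq ?_
      simp [ha]
    calc ‖δ u - δ ((insert a s).piecewise v u)‖
        ≤ ‖δ u - δ (s.piecewise v u)‖ + ‖δ (s.piecewise v u) - δ ((insert a s).piecewise v u)‖ :=
          norm_sub_le_norm_sub_add_norm_sub _ _ _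
      _ ≤ _ := by rw [sum_insert ha]; linarith

theorem norm_sq_le_one_add_mul_norm_sq_add {E : Type*} [SeminormedAddCommGroup E]
    (a b : E) {lam : ℝ} (hlam : 0 < lam) :
    ‖a‖ ^ 2 ≤ (1 + lam) * ‖b‖ ^ 2 + (1 + 1 / lam) * ‖a - b‖ ^ 2 := by
  have htri : ‖a‖ ≤ ‖b‖ + ‖a - b‖ := norm_le_norm_add_norm_sub' a b
  have hyoung : 2 * ‖b‖ * ‖a - b‖ ≤ lam * ‖b‖ ^ 2 + 1 / lam * ‖a - b‖ ^ 2 := by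
    have := div_nonneg (sq_nonneg (lam * ‖b‖ - ‖a - b‖)) hlam.le
    field_simp at this ⊢
    nlinarith
  nlinarith [pow_le_pow_left₀ (norm_nonneg a) htri 2]

theorem sq_add_weighted_sum_le {ι : Type*} [Fintype ι] {w : ι → ℝ} (hw : ∀ i, 0 ≤ w i)
    (a : ℝ) (b : ι → ℝ) :
    (a + ∑ i, w i * b i) ^ 2 ≤ (1 + ∑ i, w i) * (a ^ 2 + ∑ i, w i * b i ^ 2) := by
  -- Cauchy–Schwarz over `Option ι`, with weight `1` and value `a` at `none`.
  have h := sum_sq_le_sum_mul_sum_of_sq_le_mul (univ : Finset (Option ι))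
    (r := fun o => o.elim a fun i => w i * b i) (f := fun o => o.elim 1 w)
    (g := fun o => o.elim (a ^ 2) fun i => w i * b i ^ 2)
    (by rintro (_ | i) - <;> simp [hw])
    (by rintro (_ | i) - <;> simp [sq_nonneg, mul_nonneg (hw _) (sq_nonneg _)])
    (by rintro (_ | i) - <;> exact le_of_eq (by simp only [Option.elim]; ring))
  simpa [Fintype.sum_option] using h

theorem half_norm_sq_sub_le_of_coordinatewise_lipschitz {ι E : Type*} [Fintype ι]
    [SeminormedAddCommGroup E] {δ : (ι → E) → E} {L : ι → ℝ} (hL : ∀ i, 0 ≤ L i)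
    (hδ : ∀ (i : ι) (u v : ι → E), (∀ j, j ≠ i → u j = v j) → ‖δ u - δ v‖ ≤ L i * ‖u i - v i‖)
    {lam : ℝ} (hlam : 0 < lam) (y y' : E) (u u' : ι → E) :
    1 / 2 * ‖y - δ u‖ ^ 2 - (1 + lam) * (1 / 2 * ‖y' - δ u'‖ ^ 2) ≤
      (1 + 1 / lam) * ((1 + ∑ i, L i) / 2) * (‖y - y'‖ ^ 2 + ∑ i, L i * ‖u i - u' i‖ ^ 2) := by
  have hdiff : ‖(y - δ u) - (y' - δ u')‖ ≤ ‖y - y'‖ + ∑ i, L i * ‖u i - u' i‖ :=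
    calc ‖(y - δ u) - (y' - δ u')‖ = ‖(y - y') - (δ u - δ u')‖ := by congr 1; abel
      _ ≤ ‖y - y'‖ + ‖δ u - δ u'‖ := norm_sub_le _ _
      _ ≤ _ := by gcongr; exact norm_sub_le_sum_of_coordinatewise_lipschitz hδ u u'
  have hdiff_sq : ‖(y - δ u) - (y' - δ u')‖ ^ 2 ≤
      (1 + ∑ i, L i) * (‖y - y'‖ ^ 2 + ∑ i, L i * ‖u i - u' i‖ ^ 2) :=
    (pow_le_pow_left₀ (norm_nonneg _) hdiff 2).trans (sq_add_weighted_sum_le hL _ _)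
  have hpp := norm_sq_le_one_add_mul_norm_sq_add (y - δ u) (y' - δ u') hlam
  calc 1 / 2 * ‖y - δ u‖ ^ 2 - (1 + lam) * (1 / 2 * ‖y' - δ u'‖ ^ 2)
      ≤ (1 + 1 / lam) / 2 * ‖(y - δ u) - (y' - δ u')‖ ^ 2 := by linarith
    _ ≤ (1 + 1 / lam) / 2 *
          ((1 + ∑ i, L i) * (‖y - y'‖ ^ 2 + ∑ i, L i * ‖u i - u' i‖ ^ 2)) := by gcongr
    _ = _ := by ring

theorem sum_Icc_comp_sub_le {f : ℤ → ℝ} (hf : ∀ s, 0 ≤ f s) {a : ℤ} (hfa : ∀ s < a, f s = 0)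
    (b : ℤ) {k : ℤ} (hk : 0 ≤ k) : ∑ t ∈ Icc a b, f (t - k) ≤ ∑ t ∈ Icc a b, f t :=
  calc ∑ t ∈ Icc a b, f (t - k) = ∑ s ∈ Icc (a - k) (b - k), f s :=
        sum_nbij' (· - k) (· + k) (by intro t; simp only [mem_Icc]; omega)
          (by intro s; simp only [mem_Icc]; omega)
          (fun _ _ => sub_add_cancel _ _) (fun _ _ => add_sub_cancel_right _ _) fun _ _ => rfl
    _ ≤ ∑ s ∈ Icc (a - k) b, f s :=
        sum_le_sum_of_subset_of_nonneg (Icc_subset_Icc le_rfl (by omega)) fun _ _ _ => hf _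
    _ = ∑ s ∈ Icc a b, f s :=
        (sum_subset (Icc_subset_Icc (by omega) le_rfl) fun s hs hs' =>
          hfa s (by simp only [mem_Icc] at hs hs'; omega)).symm

theorem sum_Icc_add_weighted_lags_le {ι : Type*} [Fintype ι] {L : ι → ℝ} (hL : ∀ i, 0 ≤ L i)
    {lag : ι → ℤ} (hlag : ∀ i, 0 ≤ lag i) {f : ℤ → ℝ} (hf : ∀ s, 0 ≤ f s) {a : ℤ}
    (hfa : ∀ s < a, f s = 0) (b : ℤ) :
    ∑ t ∈ Icc a b, (f t + ∑ i, L i * f (t - lag i)) ≤ (1 + ∑ i, L i) * ∑ t ∈ Icc a b, f t := by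
  rw [sum_add_distrib, sum_comm, add_mul, one_mul, sum_mul]
  gcongr with i
  rw [← mul_sum]
  exact mul_le_mul_of_nonneg_left (sum_Icc_comp_sub_le hf hfa b (hlag i)) (hL i)

theorem switching_cost_smoothness_general
    {X : Type*} [NormedAddCommGroup X]
    {p : ℕ} (T : ℕ)
    (δ : (Fin p → X) → X) (L : Fin p → ℝ) (hL : ∀ i, 0 ≤ L i)
    (hδ : ∀ (i : Fin p) (u v : Fin p → X), (∀ j, j ≠ i → u j = v j) →
      ‖δ u - δ v‖ ≤ L i * ‖u i - v i‖)
    (lam : ℝ) (hlam : 0 < lam)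
    (x x' : ℤ → X) (hinit : ∀ t : ℤ, t ≤ 0 → x t = x' t)
    (d d' : ℤ → ℝ)
    (hd : ∀ t : ℤ, d t = (1 / 2) * ‖x t - δ (fun i => x (t - (i + 1)))‖ ^ 2)
    (hd' : ∀ t : ℤ, d' t = (1 / 2) * ‖x' t - δ (fun i => x' (t - (i + 1)))‖ ^ 2) :
    (∑ t ∈ Finset.Icc (1 : ℤ) T, d t) - (1 + lam) * ∑ t ∈ Finset.Icc (1 : ℤ) T, d' t ≤
      (1 + 1 / lam) * ((1 + ∑ k, L k) ^ 2 / 2) *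
        ∑ t ∈ Finset.Icc (1 : ℤ) T, ‖x t - x' t‖ ^ 2 := by
  set e : ℤ → ℝ := fun s => ‖x s - x' s‖ ^ 2
  have he : ∀ s < 1, e s = 0 := fun s hs => by simp [e, hinit s (by omega)]
  calc (∑ t ∈ Icc (1 : ℤ) T, d t) - (1 + lam) * ∑ t ∈ Icc (1 : ℤ) T, d' t
      = ∑ t ∈ Icc (1 : ℤ) T, (d t - (1 + lam) * d' t) := by rw [sum_sub_distrib, mul_sum]
    _ ≤ ∑ t ∈ Icc (1 : ℤ) T, (1 + 1 / lam) * ((1 + ∑ k, L k) / 2) *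
          (e t + ∑ i : Fin p, L i * e (t - (i + 1))) :=
        sum_le_sum fun t _ => by
          rw [hd, hd']
          exact half_norm_sq_sub_le_of_coordinatewise_lipschitz hL hδ hlam _ _ _ _
    _ ≤ (1 + 1 / lam) * ((1 + ∑ k, L k) / 2) * ((1 + ∑ k, L k) * ∑ t ∈ Icc (1 : ℤ) T, e t) := by
        have hS : 0 ≤ ∑ k, L k := sum_nonneg fun k _ => hL k
        rw [← mul_sum]
        gcongr
        exact sum_Icc_add_weighted_lags_le hL (fun i => by omega) (fun s => sq_nonneg _) he T
    _ = _ := by ring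

/-- comparison of multi-step switching costs of two action
sequences.  Actions are indexed by `ℤ`; the history fed to `δ` at time `t` is
`(x_{t-1}, x_{t-2}, …, x_{t-p})`, i.e. coordinate `i` of the argument of `δ`
is the action with lag `i+1`, and `δ` is `L i`-Lipschitz in that coordinate
(so `L i` is the Lipschitz constant w.r.t. `x_{t-(i+1)}`).  The sequences share
the initial history `x_t = x'_t` for `t ≤ 0`.  Then
`Σ_{t=1}^T d_t − (1+λ) Σ_{t=1}^T d'_t
  ≤ (1+1/λ)·((1+ΣL)²/2)·Σ_{t=1}^T ‖x_t − x'_t‖²`. -/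
theorem switching_cost_smoothness
    {X : Type*} [NormedAddCommGroup X] [InnerProductSpace ℝ X]
    {p : ℕ} (hp : 1 ≤ p) (T : ℕ)
    (δ : (Fin p → X) → X) (L : Fin p → ℝ) (hL : ∀ i, 0 ≤ L i)
    (hδ : ∀ (i : Fin p) (u v : Fin p → X), (∀ j, j ≠ i → u j = v j) →
      ‖δ u - δ v‖ ≤ L i * ‖u i - v i‖)
    (lam : ℝ) (hlam : 0 < lam)
    (x x' : ℤ → X) (hinit : ∀ t : ℤ, t ≤ 0 → x t = x' t)
    (d d' : ℤ → ℝ)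
    (hd : ∀ t : ℤ, d t = (1 / 2) * ‖x t - δ (fun i => x (t - (i + 1)))‖ ^ 2)
    (hd' : ∀ t : ℤ, d' t = (1 / 2) * ‖x' t - δ (fun i => x' (t - (i + 1)))‖ ^ 2) :
    (∑ t ∈ Finset.Icc (1 : ℤ) T, d t) - (1 + lam) * ∑ t ∈ Finset.Icc (1 : ℤ) T, d' t ≤
      (1 + 1 / lam) * ((1 + ∑ k, L k) ^ 2 / 2) *
        ∑ t ∈ Finset.Icc (1 : ℤ) T, ‖x t - x' t‖ ^ 2 :=
  switching_cost_smoothness_general T δ L hL hδ lam hlam x x' hinit d d' hd hd'
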